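/- arXiv:2011.01017 — 3 statements merged into one kernel-verified Lean document; each statement's English description precedes it below -/
import Mathlib

section
/- For every real ε with 0 < ε < 1/4 and every natural number k ≥ 10/ε⁴, there exists a real δ such that (1) ε²/2 ≤ δ ≤ ε², (2) δ = i/k for some positive integer i, and (3) ⌈1/δ⌉·δ − 1 ≤ δ/2 (i.e., rounding 1 up to the nearest multiple of δ exceeds 1 by at most δ/2). -/
/-!
Take `m = ⌊2/ε²⌋` and let `δ` be the smallest multiple of `1/k` that is at least `1/m`, so that
`1/m ≤ δ ≤ 1/m + 1/k ≤ ε²`. Then `m δ ≥ 1` is a multiple of `δ`, hence `⌈1/δ⌉ δ ≤ m δ`, and `m δ`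
exceeds `1` by at most `m/k`, which is at most `1/(2m) ≤ δ/2` because `k ≥ 10/ε⁴ ≥ 2m²`.
-/

lemma exists_nat_div_mem_Icc {k : ℕ} (hk : 0 < k) {x : ℝ} (hx : 0 < x) :
    ∃ i : ℕ, 0 < i ∧ x ≤ (i : ℝ) / k ∧ (i : ℝ) / k ≤ x + 1 / k := by
  have hk' : (0 : ℝ) < k := by exact_mod_cast hk
  refine ⟨⌈k * x⌉₊, Nat.ceil_pos.mpr (by positivity), ?_, ?_⟩
  · rw [le_div_iff₀ hk', mul_comm]
    exact Nat.le_ceil _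
  · rw [div_le_iff₀ hk', add_mul, one_div_mul_cancel hk'.ne', mul_comm]
    exact (Nat.ceil_lt_add_one (by positivity)).le

lemma ceil_one_div_mul_sub_one_le {m : ℕ} {k δ : ℝ} (hm : 0 < m) (hmk : 2 * (m : ℝ) ^ 2 ≤ k)
    (hδ₁ : 1 / (m : ℝ) ≤ δ) (hδ₂ : δ ≤ 1 / m + 1 / k) :
    (⌈1 / δ⌉ : ℝ) * δ - 1 ≤ δ / 2 := by
  have hm' : (0 : ℝ) < m := by exact_mod_cast hm
  have hk : 0 < k := by nlinarith
  have hδ : 0 < δ := lt_of_lt_of_le (by positivity) hδ₁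
  have hmδ : 1 ≤ m * δ := by rwa [div_le_iff₀' hm'] at hδ₁
  have hceil : (⌈1 / δ⌉ : ℝ) ≤ m := by
    exact_mod_cast Int.ceil_le.mpr (by rw [div_le_iff₀ hδ]; exact_mod_cast hmδ)
  have hmk' : (m : ℝ) / k ≤ 1 / (2 * m) := by
    rw [div_le_div_iff₀ hk (by positivity)]
    nlinarith
  calc (⌈1 / δ⌉ : ℝ) * δ - 1 ≤ m * δ - 1 := by gcongr
    _ ≤ m * (1 / m + 1 / k) - 1 := by gcongr
    _ = m / k := by field_simp; ring
    _ ≤ 1 / (2 * m) := hmk'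
    _ = 1 / m / 2 := by rw [div_div, mul_comm]
    _ ≤ δ / 2 := by gcongr

lemma exists_nat_inv_mem_Icc {t k : ℝ} (ht₀ : 0 < t) (ht : t < 1 / 16) (hk : 10 / t ^ 2 ≤ k) :
    ∃ m : ℕ, 0 < m ∧ t / 2 ≤ 1 / (m : ℝ) ∧ 1 / (m : ℝ) + 1 / k ≤ t ∧ 2 * (m : ℝ) ^ 2 ≤ k := by
  have h2t : 0 < 2 / t := by positivity
  have hm₁ : (⌊2 / t⌋₊ : ℝ) ≤ 2 / t := Nat.floor_le h2t.le
  have hm₂ : 2 / t - 1 < ⌊2 / t⌋₊ := Nat.sub_one_lt_floor _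
  set m := ⌊2 / t⌋₊
  rw [le_div_iff₀ ht₀] at hm₁
  rw [div_sub_one ht₀.ne', div_lt_iff₀ ht₀] at hm₂
  have hm : (0 : ℝ) < m := by nlinarith
  have hk₀ : 0 < k := lt_of_lt_of_le (by positivity) hk
  have hk' : 10 ≤ k * t ^ 2 := by rwa [div_le_iff₀ (by positivity)] at hk
  refine ⟨m, by exact_mod_cast hm, ?_, ?_, ?_⟩
  · rw [div_le_div_iff₀ two_pos hm]
    linarith
  · have h1k : 1 / k ≤ t ^ 2 / 10 := by
      rw [div_le_div_iff₀ hk₀ (by norm_num)]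
      linarith
    have h1m : 1 / (m : ℝ) ≤ t - t ^ 2 / 10 := by
      rw [div_le_iff₀ hm]
      nlinarith
    linarith
  · have hmt : (m * t) ^ 2 ≤ 4 := by nlinarith
    nlinarith

theorem stmt_0 (ε : ℝ) (hε0 : 0 < ε) (hε : ε < 1/4) (k : ℕ) (hk : 10 / ε^4 ≤ (k : ℝ)) :
    ∃ δ : ℝ, ε^2 / 2 ≤ δ ∧ δ ≤ ε^2 ∧ (∃ i : ℕ, 0 < i ∧ δ = (i : ℝ) / k) ∧
      (⌈1/δ⌉ : ℝ) * δ - 1 ≤ δ / 2 := by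
  obtain ⟨m, hm, hm₁, hm₂, hmk⟩ :=
    exists_nat_inv_mem_Icc (t := ε ^ 2) (k := k) (by positivity) (by nlinarith) (by rwa [← pow_mul])
  have hk : 0 < k := by exact_mod_cast (by positivity : (0 : ℝ) < 2 * (m : ℝ) ^ 2).trans_le hmk
  obtain ⟨i, hi, hδ₁, hδ₂⟩ := exists_nat_div_mem_Icc hk (x := 1 / m) (by positivity)
  exact ⟨i / k, hm₁.trans hδ₁, hδ₂.trans hm₂, ⟨i, hi, rfl⟩,
    ceil_one_div_mul_sub_one_le hm hmk hδ₁ hδ₂⟩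
end

section
/- Let a : ℕ → ℝ be a sequence of positive reals, each a multiple of 1/k for a positive integer k, and let A_i = a_1 + ... + a_i. If A_t ≤ 1, then the sum over i = 1 to t of a_i / A_i is at most the harmonic sum H_{k} = ∑_{j=1}^{k} 1/j, and in particular is O(log k). -/
open Finset

theorem div_add_le_sum_Ioc_one_div (m c : ℕ) :
    (c : ℝ) / (m + c) ≤ ∑ j ∈ Ioc m (m + c), (1 : ℝ) / j := by
  have hbound : ∀ j ∈ Ioc m (m + c), (1 : ℝ) / (m + c) ≤ 1 / j := by
    intro j hj
    rw [mem_Ioc] at hj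
    exact one_div_le_one_div_of_le (by exact_mod_cast (Nat.zero_le m).trans_lt hj.1)
      (by exact_mod_cast hj.2)
  calc (c : ℝ) / (m + c) = #(Ioc m (m + c)) • ((1 : ℝ) / (m + c)) := by
        rw [Nat.card_Ioc, Nat.add_sub_cancel_left, nsmul_eq_mul, mul_one_div]
    _ ≤ ∑ j ∈ Ioc m (m + c), (1 : ℝ) / j := card_nsmul_le_sum _ _ _ hbound

/-- Each ratio `c i / S i` is bounded by the block of the harmonic series between the
consecutive partial sums `S (i - 1) < j ≤ S i`. -/
theorem sum_div_partialSum_le_sum_one_div (c : ℕ → ℕ) (t : ℕ) :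
    ∑ i ∈ Icc 1 t, (c i : ℝ) / (∑ j ∈ Icc 1 i, c j : ℕ) ≤
      ∑ j ∈ Icc 1 (∑ i ∈ Icc 1 t, c i), (1 : ℝ) / j := by
  induction t with
  | zero => simp
  | succ n ih =>
    set S := ∑ j ∈ Icc 1 n, c j
    have hsucc : ∑ j ∈ Icc 1 (n + 1), c j = S + c (n + 1) :=
      sum_Icc_succ_top (Nat.le_add_left 1 n) c
    have hsplit : ∑ j ∈ Icc 1 (S + c (n + 1)), (1 : ℝ) / j =
        ∑ j ∈ Icc 1 S, (1 : ℝ) / j + ∑ j ∈ Ioc S (S + c (n + 1)), (1 : ℝ) / j :=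
      (sum_Ioc_consecutive _ (Nat.zero_le S) (Nat.le_add_right S _)).symm
    rw [sum_Icc_succ_top (Nat.le_add_left 1 n), hsucc, hsplit, Nat.cast_add]
    exact add_le_add ih (div_add_le_sum_Ioc_one_div S (c (n + 1)))

theorem stmt_1 (k : ℕ) (hk : 0 < k) (a : ℕ → ℝ)
    (ha : ∀ i, ∃ c : ℕ, 0 < c ∧ a i = (c : ℝ) / k)
    (A : ℕ → ℝ) (hA : ∀ i, A i = ∑ j ∈ Finset.Icc 1 i, a j)
    (t : ℕ) (ht : A t ≤ 1) :
    ∑ i ∈ Finset.Icc 1 t, a i / A i ≤ ∑ j ∈ Finset.Icc 1 k, (1 : ℝ) / j := by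
  choose c _ hac using ha
  have hk' : (0 : ℝ) < k := by exact_mod_cast hk
  have hA_eq : ∀ i, A i = (∑ j ∈ Icc 1 i, c j : ℕ) / k := fun i => by
    rw [hA, Nat.cast_sum, sum_div]
    exact sum_congr rfl fun j _ => hac j
  have hterm : ∀ i, a i / A i = c i / (∑ j ∈ Icc 1 i, c j : ℕ) := fun i => by
    rw [hac, hA_eq, div_div_div_cancel_right₀ hk'.ne']
  have hSt : ∑ j ∈ Icc 1 t, c j ≤ k := by
    rw [hA_eq, div_le_one hk'] at ht
    exact_mod_cast ht
  calc ∑ i ∈ Icc 1 t, a i / A i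
      = ∑ i ∈ Icc 1 t, (c i : ℝ) / (∑ j ∈ Icc 1 i, c j : ℕ) := sum_congr rfl fun i _ => hterm i
    _ ≤ ∑ j ∈ Icc 1 (∑ i ∈ Icc 1 t, c i), (1 : ℝ) / j := sum_div_partialSum_le_sum_one_div c t
    _ ≤ ∑ j ∈ Icc 1 k, (1 : ℝ) / j :=
        sum_le_sum_of_subset_of_nonneg (Icc_subset_Icc_right hSt) fun j _ _ => by positivity
end

section
/- Suppose a real quantity v_s starts at 1 and only decreases over a sequence of commit operations, where the i-th operation decreases v_s by ξ_i ≥ 0. Let δ > 0 satisfy ⌈1⌉_δ − 1 ≤ δ/2 (rounding 1 up to a multiple of δ). Let X be the number of times the value ⌈v_s⌉_δ (v_s rounded up to a multiple of δ) changes during the sequence. If X ≥ 1, then δ·(X − 1) + δ/2 ≤ ∑_i ξ_i. -/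
/-!
Write `a i = ⌈v i / δ⌉`, so that `⌈v i⌉_δ = a i * δ`. Since `v` decreases, `a` is a decreasing
integer sequence, and each of its `X` changes lowers it by at least one; hence
`v n ≤ a n * δ ≤ (⌈1/δ⌉ - X) * δ ≤ 1 + δ / 2 - X * δ`, while `∑ ξ i = 1 - v n` telescopes.
-/

open Finset

lemma Antitone.add_card_filter_succ_ne_le {a : ℕ → ℤ} (ha : Antitone a) (n : ℕ) :
    a n + #{i ∈ range n | a (i + 1) ≠ a i} ≤ a 0 := by
  induction n with
  | zero => simp
  | succ k ih =>
    have hstep : a (k + 1) ≤ a k := ha k.le_succ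
    rw [range_add_one, filter_insert]
    split_ifs with hne
    · rw [card_insert_of_notMem (by simp)]
      omega
    · omega

lemma Antitone.le_ceil_div_sub_card_mul {v : ℕ → ℝ} (hv : Antitone v) {δ : ℝ} (hδ : 0 < δ)
    (n : ℕ) :
    v n ≤ (⌈v 0 / δ⌉ - #{i ∈ range n | (⌈v (i + 1) / δ⌉ : ℝ) * δ ≠ (⌈v i / δ⌉ : ℝ) * δ}) * δ := by
  have ha : Antitone fun i => ⌈v i / δ⌉ := fun i j hij =>
    Int.ceil_le_ceil (div_le_div_of_nonneg_right (hv hij) hδ.le)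
  have hfilter : {i ∈ range n | (⌈v (i + 1) / δ⌉ : ℝ) * δ ≠ (⌈v i / δ⌉ : ℝ) * δ}
      = {i ∈ range n | ⌈v (i + 1) / δ⌉ ≠ ⌈v i / δ⌉} :=
    filter_congr fun i _ => by rw [Ne, mul_left_inj' hδ.ne', Int.cast_inj]
  have hcount : (⌈v n / δ⌉ : ℝ) ≤ ⌈v 0 / δ⌉ - #{i ∈ range n | ⌈v (i + 1) / δ⌉ ≠ ⌈v i / δ⌉} := by
    rw [le_sub_iff_add_le]
    exact_mod_cast ha.add_card_filter_succ_ne_le n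
  calc v n ≤ ⌈v n / δ⌉ * δ := (div_le_iff₀ hδ).mp (Int.le_ceil _)
    _ ≤ _ := by rw [hfilter]; exact mul_le_mul_of_nonneg_right hcount hδ.le

theorem stmt_8_general (δ : ℝ) (hδ : 0 < δ) (hround : (⌈1/δ⌉ : ℝ) * δ - 1 ≤ δ / 2)
    (n : ℕ) (ξ : ℕ → ℝ) (hξ : ∀ i, 0 ≤ ξ i)
    (v : ℕ → ℝ) (hv0 : v 0 = 1) (hv : ∀ i, v (i + 1) = v i - ξ i)
    (X : ℕ)
    (hX : X = ((Finset.range n).filter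
      (fun i => (⌈v (i + 1) / δ⌉ : ℝ) * δ ≠ (⌈v i / δ⌉ : ℝ) * δ)).card) :
    δ * ((X : ℝ) - 1) + δ / 2 ≤ ∑ i ∈ Finset.range n, ξ i := by
  have hanti : Antitone v := antitone_nat_of_succ_le fun i => by linarith [hv i, hξ i]
  have hsum : ∑ i ∈ range n, ξ i = 1 - v n := by
    rw [← hv0, ← sum_range_sub' v n]
    exact sum_congr rfl fun i _ => by linarith [hv i]
  have hvn := hanti.le_ceil_div_sub_card_mul hδ n
  rw [hv0, ← hX, sub_mul] at hvn
  rw [hsum]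
  linarith

theorem stmt_8 (δ : ℝ) (hδ : 0 < δ) (hround : (⌈1/δ⌉ : ℝ) * δ - 1 ≤ δ / 2)
    (n : ℕ) (ξ : ℕ → ℝ) (hξ : ∀ i, 0 ≤ ξ i)
    (v : ℕ → ℝ) (hv0 : v 0 = 1) (hv : ∀ i, v (i + 1) = v i - ξ i)
    (X : ℕ)
    (hX : X = ((Finset.range n).filter
      (fun i => (⌈v (i + 1) / δ⌉ : ℝ) * δ ≠ (⌈v i / δ⌉ : ℝ) * δ)).card)
    (hX1 : 1 ≤ X) :
    δ * ((X : ℝ) - 1) + δ / 2 ≤ ∑ i ∈ Finset.range n, ξ i :=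
  stmt_8_general δ hδ hround n ξ hξ v hv0 hv X hX
end
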